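/- If the cross-composition graph G(S) has an induced matching with at least k = n + |𝒞| - n/3 + 1 edges, then for some index ℓ in {1, ..., t} there exists an exact cover of X by sets of C_ℓ. -/

import Mathlib

open SimpleGraph

/-- `M` is a matching of `G`, viewed as a set of edges. -/
def MatchingEdges {V : Type*} (G : SimpleGraph V) (M : Set (Sym2 V)) : Prop :=
  M ⊆ G.edgeSet ∧ ∀ e ∈ M, ∀ f ∈ M, e ≠ f → ∀ v : V, v ∈ e → v ∉ f

/-- The set of `M`-saturated vertices. -/
def msat {V : Type*} (M : Set (Sym2 V)) : Set V := {v | ∃ e ∈ M, v ∈ e}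

/-- `M` is an induced matching of `G`. -/
def InducedMatchingEdges {V : Type*} (G : SimpleGraph V) (M : Set (Sym2 V)) : Prop :=
  MatchingEdges G M ∧
    ∀ u v : V, u ∈ msat M → v ∈ msat M → G.Adj u v → s(u, v) ∈ M

/-- The union `𝒞` of the families `C 1, ..., C t`. -/
def allSets (n t : ℕ) (C : Fin t → Finset (Finset (Fin n))) : Finset (Finset (Fin n)) :=
  Finset.univ.biUnion C

/-- Vertex type of the cross-composition graph: `Sum.inl a` is `v_a`;
`Sum.inr (Sum.inl (S, 0))` is the star center `w_S` and `Sum.inr (Sum.inl (S, 1))` is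
the leaf `w_S^*`; `Sum.inr (Sum.inr (Sum.inl ⟨S, x⟩))` is the interface vertex `w_{S,x}`
(for `x ∈ S`); `Sum.inr (Sum.inr (Sum.inr none))` is `q` and
`Sum.inr (Sum.inr (Sum.inr (some i)))` is `p_i`. -/
abbrev CCVert (n t : ℕ) (C : Fin t → Finset (Finset (Fin n))) : Type _ :=
  Fin n ⊕ (({S // S ∈ allSets n t C} × Fin 2) ⊕
    ((Σ S : {S // S ∈ allSets n t C}, {x : Fin n // x ∈ S.val}) ⊕ Option (Fin t)))

/-- The cross-composition graph `G(S)` (with `I` a star centered at `q`). -/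
def CCGraph (n t : ℕ) (C : Fin t → Finset (Finset (Fin n))) :
    SimpleGraph (CCVert n t C) :=
  SimpleGraph.fromRel (fun a b =>
    match a, b with
    -- v_a ~ w_{S,x} iff x = a
    | Sum.inl a, Sum.inr (Sum.inr (Sum.inl ⟨_, x⟩)) => (x : Fin n) = a
    -- w_S ~ w_S^*
    | Sum.inr (Sum.inl (S, _)), Sum.inr (Sum.inl (S', _)) => S = S'
    -- w_S ~ w_{S,x}
    | Sum.inr (Sum.inl (S, i)), Sum.inr (Sum.inr (Sum.inl ⟨S', _⟩)) => S = S' ∧ i = 0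
    -- q ~ p_i
    | Sum.inr (Sum.inr (Sum.inr o)), Sum.inr (Sum.inr (Sum.inr o')) =>
        o = none ∨ o' = none
    -- p_i ~ w_{S,x} iff S ∉ C i
    | Sum.inr (Sum.inr (Sum.inr (some i))), Sum.inr (Sum.inr (Sum.inl ⟨S, _⟩)) =>
        (S : Finset (Fin n)) ∉ C i
    | _, _ => False)

/-- There is an exact cover of `X = {1,...,n}` by sets of the family `F`: a subfamily of
`F` consisting of pairwise disjoint sets whose union is `X`. -/
def ExCov {n : ℕ} (F : Finset (Finset (Fin n))) : Prop :=
  ∃ T ⊆ F, (∀ s ∈ T, ∀ s' ∈ T, s ≠ s' → Disjoint s s') ∧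
    T.biUnion id = Finset.univ

/-!
Charge the edges of an induced matching `M` of `G(S)`. An edge `v_a w_{S,a}` uses up `v_a`.
Every other edge except the `q p_i` lies at a star `Q_S`; since `M` is induced, each star carries
at most one of them, and none if it already carries an edge `v_a w_{S,a}`. With `P` the edges
`v_a w_{S,a}` of `M` and `T` the stars they touch, `|M| + |T| ≤ |P| + |𝒞| + 1`, while
`|P| ≤ n` and `|P| ≤ 3|T|`. The bound `|M| ≥ n + |𝒞| - n/3 + 1` therefore forces `|P| = n`,
`3|T| = n` and an edge `q p_ℓ` in `M`. So the `n/3` triples of `T` cover `X` and are pairwise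
disjoint, and they all lie in `C_ℓ`, since `p_ℓ` is adjacent to every `w_{S,x}` with `S ∉ C_ℓ`.
-/

theorem MatchingEdges.eq_of_mem_of_mem {V : Type*} {G : SimpleGraph V} {M : Set (Sym2 V)}
    (hM : MatchingEdges G M) {e f : Sym2 V} {v : V} (he : e ∈ M) (hf : f ∈ M)
    (hve : v ∈ e) (hvf : v ∈ f) : e = f :=
  by_contra fun hef => hM.2 e he f hf hef v hve hvf

theorem InducedMatchingEdges.eq_of_adj {V : Type*} {G : SimpleGraph V} {M : Set (Sym2 V)}
    (hM : InducedMatchingEdges G M) {e f : Sym2 V} {u v : V} (he : e ∈ M) (hf : f ∈ M)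
    (hu : u ∈ e) (hv : v ∈ f) (huv : G.Adj u v) : e = f := by
  have huv' : s(u, v) ∈ M := hM.2 u v ⟨e, he, hu⟩ ⟨f, hf, hv⟩ huv
  rw [hM.1.eq_of_mem_of_mem he huv' hu (Sym2.mem_mk_left u v),
    hM.1.eq_of_mem_of_mem hf huv' hv (Sym2.mem_mk_right u v)]

theorem Finset.disjoint_of_sum_card_le_card_biUnion {α : Type*} [DecidableEq α]
    {T : Finset (Finset α)} (hT : ∑ s ∈ T, s.card ≤ (T.biUnion id).card)
    {s s' : Finset α} (hs : s ∈ T) (hs' : s' ∈ T) (hne : s ≠ s') : Disjoint s s' := by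
  rw [Finset.disjoint_left]
  intro a has has'
  set A := (T.erase s').biUnion id
  have hunion : T.biUnion id = s' ∪ A := by
    conv_lhs => rw [← Finset.insert_erase hs']
    rw [Finset.biUnion_insert]
    rfl
  have hsA : s ⊆ A := Finset.subset_biUnion_of_mem id (Finset.mem_erase.2 ⟨hne, hs⟩)
  have hinter : 0 < (s' ∩ A).card := Finset.card_pos.2 ⟨a, Finset.mem_inter.2 ⟨has', hsA has⟩⟩
  have hA : A.card ≤ ∑ s ∈ T.erase s', s.card := Finset.card_biUnion_le
  have := Finset.card_union_add_card_inter s' A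
  have := Finset.add_sum_erase T Finset.card hs'
  rw [hunion] at hT
  omega

theorem exCov_of_biUnion_eq_univ {n : ℕ} {F T : Finset (Finset (Fin n))} (hTF : T ⊆ F)
    (hcover : T.biUnion id = Finset.univ) (hsum : ∑ s ∈ T, s.card ≤ n) : ExCov F :=
  ⟨T, hTF, fun _ hs _ hs' hne => Finset.disjoint_of_sum_card_le_card_biUnion
    (by rwa [hcover, Finset.card_univ, Fintype.card_fin]) hs hs' hne, hcover⟩

namespace CCGraph

abbrev CSet (n t : ℕ) (C : Fin t → Finset (Finset (Fin n))) : Type := {S // S ∈ allSets n t C}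

abbrev Slot (n t : ℕ) (C : Fin t → Finset (Finset (Fin n))) : Type :=
  Σ S : CSet n t C, {x : Fin n // x ∈ S.val}

variable {n t : ℕ} {C : Fin t → Finset (Finset (Fin n))}

-- Without this shortcut, instance search fails on goals such as `DecidablePred (· ∈ F)`.
instance : DecidableEq (CCVert n t C) := inferInstance

abbrev v (a : Fin n) : CCVert n t C := Sum.inl a

abbrev w (S : CSet n t C) : CCVert n t C := Sum.inr (Sum.inl (S, 0))

abbrev wx (s : Slot n t C) : CCVert n t C := Sum.inr (Sum.inr (Sum.inl s))

abbrev q : CCVert n t C := Sum.inr (Sum.inr (Sum.inr none))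

abbrev p (i : Fin t) : CCVert n t C := Sum.inr (Sum.inr (Sum.inr (some i)))

def vEdge (s : Slot n t C) : Sym2 (CCVert n t C) := s(v s.2.val, wx s)

-- The edges charged to the star `Q_S`; an edge `p_i w_{S,x}` counts as one of them.
def IsStarEdge (S : CSet n t C) (e : Sym2 (CCVert n t C)) : Prop :=
  w S ∈ e ∨ ∃ i x, S.val ∉ C i ∧ e = s(p i, wx ⟨S, x⟩)

def IsQEdge (e : Sym2 (CCVert n t C)) : Prop := ∃ i, e = s(q, p i)

instance : DecidablePred (IsQEdge (C := C)) := fun _ => inferInstanceAs (Decidable (∃ _, _))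

theorem adj_w_wx (S : CSet n t C) (x : {x : Fin n // x ∈ S.val}) :
    (CCGraph n t C).Adj (w S) (wx ⟨S, x⟩) := by
  simp [CCGraph]

theorem adj_p_wx {i : Fin t} {S : CSet n t C} (h : S.val ∉ C i) (x : {x : Fin n // x ∈ S.val}) :
    (CCGraph n t C).Adj (p i) (wx ⟨S, x⟩) := by
  simp [CCGraph, h]

theorem vEdge_injective : Function.Injective (vEdge (n := n) (t := t) (C := C)) := by
  intro s s' h
  simp only [vEdge, Sym2.eq_iff, Sum.inl.injEq, Sum.inr.injEq, reduceCtorEq, and_false,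
    or_false] at h
  exact h.2

theorem edge_cases {e : Sym2 (CCVert n t C)} (he : e ∈ (CCGraph n t C).edgeSet) :
    (∃ s, e = vEdge s) ∨ (∃ S, IsStarEdge S e) ∨ IsQEdge e := by
  induction e using Sym2.ind with
  | _ a b =>
    rw [SimpleGraph.mem_edgeSet, CCGraph, SimpleGraph.fromRel_adj] at he
    obtain ⟨hne, h⟩ := he
    rcases a with a | (⟨S, i⟩ | (⟨S, x⟩ | (_ | i))) <;>
      rcases b with b | (⟨S', i'⟩ | (⟨S', x'⟩ | (_ | i'))) <;>
      simp_all [vEdge, IsStarEdge, IsQEdge, -Subtype.exists, -Sigma.exists]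
    -- the edge `w_S w_S^*`, in either orientation
    obtain rfl : S = S' := h.elim id Eq.symm
    exact ⟨S, by fin_cases i <;> fin_cases i' <;> simp_all⟩

variable {F : Finset (Sym2 (CCVert n t C))}

def vSlots (F : Finset (Sym2 (CCVert n t C))) : Finset (Slot n t C) :=
  Finset.univ.filter (vEdge · ∈ F)

def vStars (F : Finset (Sym2 (CCVert n t C))) : Finset (CSet n t C) :=
  (vSlots F).image Sigma.fst

theorem IsStarEdge.eq_of_mem (hF : InducedMatchingEdges (CCGraph n t C) F) {S : CSet n t C}
    {e f : Sym2 (CCVert n t C)} (he : e ∈ F) (hf : f ∈ F) (hSe : IsStarEdge S e)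
    (hSf : IsStarEdge S f) : e = f := by
  have key : ∀ {e f}, e ∈ F → f ∈ F → IsStarEdge S e →
      ∀ i x, S.val ∉ C i → f = s(p i, wx ⟨S, x⟩) → e = f := by
    rintro e f he hf (hw | ⟨j, y, hj, rfl⟩) i x - rfl
    · exact hF.eq_of_adj he hf hw (Sym2.mem_mk_right _ _) (adj_w_wx S x)
    · exact hF.eq_of_adj he hf (Sym2.mem_mk_left _ _) (Sym2.mem_mk_right _ _) (adj_p_wx hj x)
  rcases hSf with hwf | ⟨i, x, hi, rfl⟩
  · rcases hSe with hwe | ⟨i, x, hi, rfl⟩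
    · exact hF.1.eq_of_mem_of_mem he hf hwe hwf
    · exact (key hf he (Or.inl hwf) i x hi rfl).symm
  · exact key he hf hSe i x hi rfl

theorem not_isStarEdge_of_mem_vStars (hF : InducedMatchingEdges (CCGraph n t C) F)
    {S : CSet n t C} (hS : S ∈ vStars F) {e : Sym2 (CCVert n t C)} (he : e ∈ F) :
    ¬ IsStarEdge S e := by
  obtain ⟨⟨S, x⟩, hx, rfl⟩ := Finset.mem_image.1 hS
  replace hx : vEdge ⟨S, x⟩ ∈ F := (Finset.mem_filter.1 hx).2
  rintro (hw | ⟨i, y, hi, rfl⟩)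
  · have := hF.eq_of_adj he hx hw (Sym2.mem_mk_right _ _) (adj_w_wx S x)
    simp [this, vEdge] at hw
  · have := hF.eq_of_adj he hx (Sym2.mem_mk_left _ _) (Sym2.mem_mk_right _ _) (adj_p_wx hi x)
    simp [vEdge] at this

theorem injOn_vSlots (hF : MatchingEdges (CCGraph n t C) F) :
    Set.InjOn (fun s : Slot n t C => s.2.val) (vSlots F) := by
  intro s hs s' hs' h
  apply vEdge_injective
  refine hF.eq_of_mem_of_mem (Finset.mem_filter.1 hs).2 (Finset.mem_filter.1 hs').2
    (Sym2.mem_mk_left (v s.2.val) _) ?_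
  rw [show s.2.val = s'.2.val from h]
  exact Sym2.mem_mk_left _ _

theorem card_vSlots_le (hF : MatchingEdges (CCGraph n t C) F) : (vSlots F).card ≤ n := by
  simpa using Finset.card_le_card_of_injOn _ (fun _ _ => Finset.mem_univ _) (injOn_vSlots hF)

theorem card_vSlots_le_sum (F : Finset (Sym2 (CCVert n t C))) :
    (vSlots F).card ≤ ∑ S ∈ vStars F, S.val.card :=
  calc (vSlots F).card ≤ ((vStars F).sigma fun _ => Finset.univ).card :=
        Finset.card_le_card fun s hs =>
          Finset.mem_sigma.2 ⟨Finset.mem_image_of_mem _ hs, Finset.mem_univ _⟩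
    _ = ∑ S ∈ vStars F, S.val.card := by simp [Finset.card_sigma]

theorem card_filter_isQEdge_le_one (hF : MatchingEdges (CCGraph n t C) F) :
    (F.filter IsQEdge).card ≤ 1 := by
  refine Finset.card_le_one.2 fun e he f hf => ?_
  obtain ⟨he, i, rfl⟩ := Finset.mem_filter.1 he
  obtain ⟨hf, j, rfl⟩ := Finset.mem_filter.1 hf
  exact hF.eq_of_mem_of_mem he hf (Sym2.mem_mk_left _ _) (Sym2.mem_mk_left _ _)

theorem card_add_card_vStars_le (hF : InducedMatchingEdges (CCGraph n t C) F) :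
    F.card + (vStars F).card ≤
      (vSlots F).card + (allSets n t C).card + (F.filter IsQEdge).card := by
  classical
  set starEdges := (Finset.univ \ vStars F).biUnion fun S => F.filter (IsStarEdge S)
  have hcover : F ⊆ (vSlots F).image vEdge ∪ starEdges ∪ F.filter IsQEdge := by
    intro e he
    rcases edge_cases (hF.1.1 he) with ⟨s, rfl⟩ | ⟨S, hS⟩ | hq
    · exact Finset.mem_union_left _ <| Finset.mem_union_left _ <|
        Finset.mem_image_of_mem _ (Finset.mem_filter.2 ⟨Finset.mem_univ _, he⟩)
    · have hST : S ∉ vStars F := fun hT => not_isStarEdge_of_mem_vStars hF hT he hS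
      exact Finset.mem_union_left _ <| Finset.mem_union_right _ <| Finset.mem_biUnion.2
        ⟨S, Finset.mem_sdiff.2 ⟨Finset.mem_univ _, hST⟩, Finset.mem_filter.2 ⟨he, hS⟩⟩
    · exact Finset.mem_union_right _ (Finset.mem_filter.2 ⟨he, hq⟩)
  have hstars : starEdges.card ≤ (Finset.univ \ vStars F).card * 1 :=
    Finset.card_biUnion_le_card_mul _ _ _ fun S _ => Finset.card_le_one.2 fun e he f hf =>
      IsStarEdge.eq_of_mem hF (Finset.mem_filter.1 he).1 (Finset.mem_filter.1 hf).1
        (Finset.mem_filter.1 he).2 (Finset.mem_filter.1 hf).2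
  have hcompl : (Finset.univ \ vStars F).card + (vStars F).card = (allSets n t C).card := by
    rw [Finset.card_sdiff_add_card_eq_card (Finset.subset_univ _), Finset.card_univ,
      Fintype.card_coe]
  have hunion := (Finset.card_le_card hcover).trans <| (Finset.card_union_le _ _).trans <|
    Nat.add_le_add_right (Finset.card_union_le _ _) _
  have := Finset.card_image_le (s := vSlots F) (f := vEdge)
  omega

theorem vStars_subset (hF : InducedMatchingEdges (CCGraph n t C) F) {ℓ : Fin t}
    (hℓ : s(q, p ℓ) ∈ F) : (vStars F).image Subtype.val ⊆ C ℓ := by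
  intro S hS
  obtain ⟨S, hS', rfl⟩ := Finset.mem_image.1 hS
  obtain ⟨s, hs, rfl⟩ := Finset.mem_image.1 hS'
  by_contra hSℓ
  have := hF.eq_of_adj hℓ (Finset.mem_filter.1 hs).2 (Sym2.mem_mk_right _ _)
    (Sym2.mem_mk_right _ _) (adj_p_wx hSℓ s.2)
  simp [vEdge] at this

theorem biUnion_vStars_eq_univ (hF : MatchingEdges (CCGraph n t C) F)
    (hcard : (vSlots F).card = n) :
    ((vStars F).image Subtype.val).biUnion id = Finset.univ := by
  have himage : (vSlots F).image (fun s => s.2.val) = Finset.univ :=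
    Finset.eq_univ_of_card _ <| by
      rw [Finset.card_image_of_injOn (injOn_vSlots hF), hcard, Fintype.card_fin]
  refine Finset.eq_univ_of_forall fun a => ?_
  obtain ⟨s, hs, rfl⟩ := Finset.mem_image.1 (himage ▸ Finset.mem_univ a)
  exact Finset.mem_biUnion.2
    ⟨s.1.val, Finset.mem_image_of_mem _ (Finset.mem_image_of_mem _ hs), s.2.2⟩

end CCGraph

theorem induced_matching_to_exactCover_general (n t : ℕ)
    (C : Fin t → Finset (Finset (Fin n)))
    (h3 : ∀ i, ∀ s ∈ C i, s.card = 3)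
    (hmatch : ∃ M : Set (Sym2 (CCVert n t C)),
      InducedMatchingEdges (CCGraph n t C) M ∧
      n + (allSets n t C).card - n / 3 + 1 ≤ M.ncard) :
    ∃ ℓ : Fin t, ExCov (C ℓ) := by
  obtain ⟨M, hM, hk⟩ := hmatch
  obtain ⟨F, rfl⟩ := M.toFinite.exists_finset_coe
  rw [Set.ncard_coe_finset] at hk
  have hsum : ∑ S ∈ CCGraph.vStars F, S.val.card = (CCGraph.vStars F).card * 3 :=
    Finset.sum_const_nat fun S _ => by
      obtain ⟨i, -, hi⟩ := Finset.mem_biUnion.1 S.2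
      exact h3 i _ hi
  have := CCGraph.card_add_card_vStars_le hM
  have := CCGraph.card_vSlots_le hM.1
  have := CCGraph.card_vSlots_le_sum F
  have := CCGraph.card_filter_isQEdge_le_one hM.1
  obtain ⟨hslots, hstars, hq⟩ : (CCGraph.vSlots F).card = n ∧ (CCGraph.vStars F).card * 3 = n ∧
      (F.filter CCGraph.IsQEdge).card = 1 := by omega
  obtain ⟨e, he⟩ := Finset.card_pos.1 (hq ▸ Nat.one_pos)
  obtain ⟨heF, ℓ, rfl⟩ := Finset.mem_filter.1 he
  refine ⟨ℓ, exCov_of_biUnion_eq_univ (CCGraph.vStars_subset hM heF)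
    (CCGraph.biUnion_vStars_eq_univ hM.1 hslots) ?_⟩
  rw [Finset.sum_image Subtype.val_injective.injOn, hsum, hstars]

/-- If the cross-composition graph has an induced matching with at least
`k = n + |𝒞| - n/3 + 1` edges, then for some index `ℓ` there is an exact cover of `X`
by sets of `C ℓ`. -/
theorem induced_matching_to_exactCover (n t m : ℕ) (hn3 : 3 ∣ n) (hn : 0 < n)
    (C : Fin t → Finset (Finset (Fin n)))
    (hm : ∀ i, (C i).card = m)
    (h3 : ∀ i, ∀ s ∈ C i, s.card = 3)
    (hne : ∀ i j : Fin t, i ≠ j → C i ≠ C j)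
    (hmatch : ∃ M : Set (Sym2 (CCVert n t C)),
      InducedMatchingEdges (CCGraph n t C) M ∧
      n + (allSets n t C).card - n / 3 + 1 ≤ M.ncard) :
    ∃ ℓ : Fin t, ExCov (C ℓ) :=
  induced_matching_to_exactCover_general n t C h3 hmatch
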